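/- arXiv:2002.08285 — 4 statements merged into one kernel-verified Lean document; each statement's English description precedes it below -/
import Mathlib

section
/- Let N ⊴ G with φ(N) ⊆ N, ψ(N) ⊆ N, and let φ̄, ψ̄ be the induced endomorphisms of G/N. If the coincidence group Coin(φ̄,ψ̄) is finite and R(φ,ψ) is finite, then R(φ|_N, ψ|_N) is finite. -/
/-- The (φ,ψ)-twisted conjugacy relation. -/
def twistRel {G : Type*} [Group G] (φ ψ : G →* G) : G → G → Prop :=
  fun a b => ∃ h : G, a = ψ h * b * (φ h)⁻¹

/-!
Inclusion `N → G` induces a map from `R(φ|_N, ψ|_N)` to `R(φ, ψ)`; it suffices to show its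
fibres are finite. Fix `n₀ ∈ N`. Any `n ∈ N` twisted-conjugate to `n₀` in `G` is
`ψ g * n₀ * (φ g)⁻¹`, and `n ∈ N` forces `gN ∈ Coin(φ̄, ψ̄)`. Changing `g` within its coset
changes `n` only by a twisted conjugation by an element of `N`, so `gN ↦ [ψ g * n₀ * (φ g)⁻¹]`
is a well-defined surjection from the finite group `Coin(φ̄, ψ̄)` onto the fibre of `[n₀]`.
-/

theorem twistRel_equivalence {G : Type*} [Group G] (φ ψ : G →* G) :
    Equivalence (twistRel φ ψ) where
  refl a := ⟨1, by simp⟩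
  symm := by
    rintro a b ⟨h, rfl⟩
    exact ⟨h⁻¹, by simp only [map_inv]; group⟩
  trans := by
    rintro a b c ⟨h, rfl⟩ ⟨k, rfl⟩
    exact ⟨h * k, by simp only [map_mul]; group⟩

def MonoidHom.restrictInvariant {G : Type*} [Group G] {N : Subgroup G} (φ : G →* G)
    (hφ : N ≤ N.comap φ) : N →* N :=
  (φ.domRestrict N).codRestrict N fun x => hφ x.2

section

variable {G : Type*} [Group G] {N : Subgroup G} {φ ψ : G →* G}
  (hφ : N ≤ N.comap φ) (hψ : N ≤ N.comap ψ)

theorem twistRel.of_restrictInvariant {a b : N}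
    (h : twistRel (φ.restrictInvariant hφ) (ψ.restrictInvariant hψ) a b) :
    twistRel φ ψ a b := by
  obtain ⟨k, rfl⟩ := h
  exact ⟨k, rfl⟩

def twistClassInclusion :
    Quot (twistRel (φ.restrictInvariant hφ) (ψ.restrictInvariant hψ)) → Quot (twistRel φ ψ) :=
  Quot.map Subtype.val fun _ _ => twistRel.of_restrictInvariant hφ hψ

variable [N.Normal]

theorem twist_mem_iff_map_mk_eq {c : G} (hc : c ∈ N) (g : G) :
    ψ g * c * (φ g)⁻¹ ∈ N ↔ QuotientGroup.map N N φ hφ g = QuotientGroup.map N N ψ hψ g := by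
  have hc' : (c : G ⧸ N) = 1 := (QuotientGroup.eq_one_iff c).mpr hc
  rw [← QuotientGroup.eq_one_iff, QuotientGroup.map_mk,
    QuotientGroup.map_mk, QuotientGroup.mk_mul, QuotientGroup.mk_mul, QuotientGroup.mk_inv, hc',
    mul_one, mul_inv_eq_one, eq_comm]

theorem twistRel_restrictInvariant_of_mk_eq {a b : N} {c g g' : G}
    (hgg' : (g : G ⧸ N) = g') (ha : (a : G) = ψ g * c * (φ g)⁻¹)
    (hb : (b : G) = ψ g' * c * (φ g')⁻¹) :
    twistRel (φ.restrictInvariant hφ) (ψ.restrictInvariant hψ) a b := by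
  have hk : g * g'⁻¹ ∈ N := by
    rw [← QuotientGroup.eq_one_iff, QuotientGroup.mk_mul, QuotientGroup.mk_inv, hgg',
      mul_inv_cancel]
  refine ⟨⟨g * g'⁻¹, hk⟩, Subtype.ext ?_⟩
  change (a : G) = ψ (g * g'⁻¹) * b * (φ (g * g'⁻¹))⁻¹
  rw [ha, hb, map_mul, map_mul, map_inv, map_inv]
  group

theorem finite_twistClassInclusion_fiber
    [Finite ((QuotientGroup.map N N φ hφ).eqLocus (QuotientGroup.map N N ψ hψ))] (n₀ : N) :
    Finite {c // twistClassInclusion hφ hψ c = Quot.mk _ (n₀ : G)} := by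
  let conj (x : (QuotientGroup.map N N φ hφ).eqLocus (QuotientGroup.map N N ψ hψ)) : N :=
    ⟨ψ x.1.out * n₀ * (φ x.1.out)⁻¹,
      (twist_mem_iff_map_mk_eq hφ hψ n₀.2 _).mpr (by rw [QuotientGroup.out_eq']; exact x.2)⟩
  refine Finite.of_surjective
    (fun x => ⟨Quot.mk _ (conj x), Quot.sound ⟨x.1.out, rfl⟩⟩) ?_
  rintro ⟨c, hc⟩
  induction c using Quot.ind with | mk n => ?_
  obtain ⟨g, hg⟩ := ((twistRel_equivalence φ ψ).quot_mk_eq_iff _ _).mp hc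
  refine ⟨⟨g, (twist_mem_iff_map_mk_eq hφ hψ n₀.2 g).mp (hg ▸ n.2)⟩, Subtype.ext ?_⟩
  exact Quot.sound
    (twistRel_restrictInvariant_of_mk_eq hφ hψ (QuotientGroup.out_eq' _) rfl hg)

end

/-- if Coin(φ̄,ψ̄) is finite and R(φ,ψ) is finite, then R(φ|_N,ψ|_N) is finite. -/
theorem reidNr_restriction_finite {G : Type*} [Group G] (N : Subgroup G) [N.Normal]
    (φ ψ : G →* G) (hφ : N ≤ N.comap φ) (hψ : N ≤ N.comap ψ)
    (hCoin : Finite {x : G ⧸ N // QuotientGroup.map N N φ hφ x = QuotientGroup.map N N ψ hψ x})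
    (hR : Finite (Quot (twistRel φ ψ))) :
    Finite (Quot (twistRel
      ((φ.domRestrict N).codRestrict N (fun x => hφ x.2))
      ((ψ.domRestrict N).codRestrict N (fun x => hψ x.2)))) := by
  have : Finite ((QuotientGroup.map N N φ hφ).eqLocus (QuotientGroup.map N N ψ hψ)) := hCoin
  have hFibre (q : Quot (twistRel φ ψ)) : Finite {c // twistClassInclusion hφ hψ c = q} := by
    rcases isEmpty_or_nonempty {c // twistClassInclusion hφ hψ c = q} with hq | ⟨c, hc⟩
    · infer_instance
    induction c using Quot.ind with | mk n₀ => ?_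
    subst hc
    exact finite_twistClassInclusion_fiber hφ hψ n₀
  exact Finite.of_equiv _ (Equiv.sigmaFiberEquiv (twistClassInclusion hφ hψ))
end

section
/- Let N ⊴ G with φ(N) ⊆ N, ψ(N) ⊆ N, and let n ∈ N. Then n ~_{φ,ψ} 1 in G if and only if there exists h ∈ G with φ(h)N = ψ(h)N in G/N such that ψ(h)⁻¹ n φ(h) ~_{φ|_N, ψ|_N} 1 in N. -/
/-- for n ∈ N, n ~_{φ,ψ} 1 in G iff there is h ∈ G with φ(h)N = ψ(h)N and
    ψ(h)⁻¹ n φ(h) ~_{φ|_N,ψ|_N} 1 in N. -/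
theorem twistConj_one_iff_coin_quot {G : Type*} [Group G] (N : Subgroup G) [N.Normal]
    (φ ψ : G →* G) (hφ : N ≤ N.comap φ) (hψ : N ≤ N.comap ψ) (n : G) (hn : n ∈ N) :
    (∃ h : G, n = ψ h * 1 * (φ h)⁻¹) ↔
      ∃ h : G, ((φ h : G ⧸ N) = (ψ h : G ⧸ N)) ∧
        ∃ m ∈ N, (ψ h)⁻¹ * n * φ h = ψ m * 1 * (φ m)⁻¹ := by
  constructor
  · rintro ⟨h, rfl⟩
    refine ⟨h, ?_, 1, one_mem _, by simp⟩
    rw [QuotientGroup.eq]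
    have : (φ h)⁻¹ * ψ h = (φ h)⁻¹ * (ψ h * 1 * (φ h)⁻¹) * φ h := by group
    rw [this]
    exact Subgroup.Normal.conj_mem' ‹N.Normal› _ hn _
  · rintro ⟨h, -, m, -, hm⟩
    refine ⟨h * m, ?_⟩
    have : n = ψ h * ((ψ h)⁻¹ * n * φ h) * (φ h)⁻¹ := by group
    rw [this, hm, map_mul, map_mul]
    group
end

section
/- Let N ⊴ G be invariant under endomorphisms φ, ψ of G. The sequence of pointed sets 1 → Coin(φ|_N,ψ|_N) → Coin(φ,ψ) → Coin(φ̄,ψ̄) →^δ 𝔯(φ|_N,ψ|_N) → 𝔯(φ,ψ) → 𝔯(φ̄,ψ̄) → 1 is exact, where δ(gN) = [ψ(g)φ(g)⁻¹]_{φ|_N,ψ|_N} for gN ∈ Coin(φ̄,ψ̄), and the other maps are induced by inclusion and projection. -/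
/-- the six-term exact sequence of pointed sets
    1 → Coin(φ|_N,ψ|_N) → Coin(φ,ψ) → Coin(φ̄,ψ̄) →^δ 𝔯(φ|_N,ψ|_N) → 𝔯(φ,ψ) → 𝔯(φ̄,ψ̄) → 1,
    stated elementwise: at each pointed set, the image of the incoming map equals the
    preimage of the basepoint under the outgoing map. -/
theorem six_term_exact_sequence {G : Type*} [Group G] (N : Subgroup G) [N.Normal]
    (φ ψ : G →* G) (hφ : N ≤ N.comap φ) (hψ : N ≤ N.comap ψ) :
    -- exactness at Coin(φ,ψ)
    (∀ g : G, φ g = ψ g → (((↑g : G ⧸ N) = 1) ↔ g ∈ N)) ∧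
    -- exactness at Coin(φ̄,ψ̄): δ(ḡ) is the basepoint iff ḡ lifts to Coin(φ,ψ)
    (∀ g : G,
      QuotientGroup.map N N φ hφ (↑g) = QuotientGroup.map N N ψ hψ (↑g) →
      ((∃ n ∈ N, ψ g * (φ g)⁻¹ = ψ n * 1 * (φ n)⁻¹) ↔
        ∃ k : G, φ k = ψ k ∧ (↑k : G ⧸ N) = ↑g)) ∧
    -- exactness at 𝔯(φ|_N,ψ|_N): [a] maps to the basepoint of 𝔯(φ,ψ) iff [a] ∈ im δ
    (∀ a ∈ N,
      ((∃ h : G, a = ψ h * 1 * (φ h)⁻¹) ↔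
        ∃ g : G, QuotientGroup.map N N φ hφ (↑g) = QuotientGroup.map N N ψ hψ (↑g) ∧
          ∃ n ∈ N, a = ψ n * (ψ g * (φ g)⁻¹) * (φ n)⁻¹)) ∧
    -- exactness at 𝔯(φ,ψ): [x] maps to the basepoint of 𝔯(φ̄,ψ̄) iff [x] ∈ im î
    (∀ x : G,
      ((∃ n ∈ N, ∃ h : G, x = ψ h * n * (φ h)⁻¹) ↔
        ∃ y : G ⧸ N, (↑x : G ⧸ N) =
          QuotientGroup.map N N ψ hψ y * 1 * (QuotientGroup.map N N φ hφ y)⁻¹)) ∧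
    -- exactness at 𝔯(φ̄,ψ̄): p̂ is surjective
    (∀ x : G ⧸ N, ∃ g : G, ∃ y : G ⧸ N,
      x = QuotientGroup.map N N ψ hψ y * (↑g : G ⧸ N) * (QuotientGroup.map N N φ hφ y)⁻¹) := by

  refine ⟨?_, ?_, ?_, ?_, ?_⟩
  · intro g _
    exact QuotientGroup.eq_one_iff g
  · intro g hg
    constructor
    · rintro ⟨n, hn, heq⟩
      refine ⟨n⁻¹ * g, ?_, ?_⟩
      · simp only [map_mul, map_inv]
        have h2 : ψ g * (φ g)⁻¹ = ψ n * (φ n)⁻¹ := by simpa using heq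
        have key := congrArg (fun z => (ψ n)⁻¹ * z * φ g) h2
        simp only [mul_assoc, inv_mul_cancel_left, inv_mul_cancel, mul_one] at key
        simpa [mul_assoc] using key.symm
      · rw [QuotientGroup.eq]
        have := Subgroup.Normal.conj_mem' ‹N.Normal› n hn g
        simpa [mul_assoc] using this
    · rintro ⟨k, hk, hkg⟩
      have hmem : k⁻¹ * g ∈ N := (QuotientGroup.eq (s := N)).mp hkg
      have hmem' : g * k⁻¹ ∈ N := by
        have := Subgroup.Normal.conj_mem ‹N.Normal› _ hmem g
        simpa [mul_assoc] using this
      refine ⟨g * k⁻¹, hmem', ?_⟩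
      simp only [map_mul, map_inv, mul_one]
      rw [hk]; group
  · intro a ha
    constructor
    · rintro ⟨h, rfl⟩
      refine ⟨h, ?_, 1, N.one_mem, by simp⟩
      have : ψ h * 1 * (φ h)⁻¹ ∈ N := ha
      have h2 : (φ h)⁻¹ * (ψ h * 1 * (φ h)⁻¹) * φ h ∈ N :=
        Subgroup.Normal.conj_mem' ‹N.Normal› _ this (φ h)
      have h3 : (φ h)⁻¹ * ψ h ∈ N := by
        have : (φ h)⁻¹ * (ψ h * 1 * (φ h)⁻¹) * φ h = (φ h)⁻¹ * ψ h := by group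
        rwa [this] at h2
      show (↑(φ h) : G ⧸ N) = ↑(ψ h)
      rw [QuotientGroup.eq]
      exact h3
    · rintro ⟨g, hg, n, hn, rfl⟩
      exact ⟨n * g, by simp only [map_mul]; group⟩
  · intro x
    constructor
    · rintro ⟨n, hn, h, rfl⟩
      refine ⟨(↑h : G ⧸ N), ?_⟩
      have : ((ψ h * n * (φ h)⁻¹ : G) : G ⧸ N) = ↑(ψ h) * ↑n * (↑(φ h))⁻¹ := by
        simp
      rw [this, (QuotientGroup.eq_one_iff (n : G)).mpr hn]
      simp
    · rintro ⟨y, hy⟩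
      obtain ⟨h, rfl⟩ := QuotientGroup.mk_surjective y
      have hy' : (↑x : G ⧸ N) = ↑(ψ h * (φ h)⁻¹) := by
        simpa using hy
      have hmem : x⁻¹ * (ψ h * (φ h)⁻¹) ∈ N := (QuotientGroup.eq (s := N)).mp hy'
      have hmem2 : (ψ h)⁻¹ * x * φ h ∈ N := by
        have h1 : (x⁻¹ * (ψ h * (φ h)⁻¹))⁻¹ ∈ N := N.inv_mem hmem
        have h2 : (x⁻¹ * (ψ h * (φ h)⁻¹))⁻¹ = φ h * (ψ h)⁻¹ * x := by group
        rw [h2] at h1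
        have := Subgroup.Normal.conj_mem' ‹N.Normal› _ h1 (φ h)
        have h3 : (φ h)⁻¹ * (φ h * (ψ h)⁻¹ * x) * φ h = (ψ h)⁻¹ * x * φ h := by group
        rwa [h3] at this
      exact ⟨(ψ h)⁻¹ * x * φ h, hmem2, h, by group⟩
  · intro x
    obtain ⟨g, rfl⟩ := QuotientGroup.mk_surjective x
    exact ⟨g, 1, by simp⟩
end

section
/- Let G be a finitely generated abelian group and φ, ψ endomorphisms of G. Then the number of (φ,ψ)-twisted conjugacy classes R(φ,ψ) is finite if and only if the coincidence group Coin(φ,ψ) = {g | φ(g) = ψ(g)} is finite. -/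
private lemma aux_finite_iff_rank_zero {M : Type*} [AddCommGroup M] [Module ℤ M]
    [Module.Finite ℤ M] : Finite M ↔ Module.rank ℤ M = 0 := by
  rw [rank_eq_zero_iff_isTorsion]
  constructor
  · intro hM x
    have hx : IsOfFinAddOrder x := isOfFinAddOrder_of_finite x
    refine ⟨⟨(addOrderOf x : ℤ),
      mem_nonZeroDivisors_of_ne_zero (by exact_mod_cast hx.addOrderOf_pos.ne')⟩, ?_⟩
    have hcast := Int.cast_smul_eq_zsmul (R := ℤ) (M := M) (addOrderOf x : ℤ) x
    rw [Int.cast_id] at hcast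
    have h1 : (addOrderOf x : ℤ) • x = (0 : M) := by
      rw [natCast_zsmul]; exact addOrderOf_nsmul_eq_zero x
    exact hcast.trans h1
  · exact fun h => Module.finite_of_fg_torsion M h

/-- for a finitely generated abelian group G, R(φ,ψ) is finite iff
    Coin(φ,ψ) is finite. -/
theorem reidNr_finite_iff_coin_finite {G : Type*} [AddCommGroup G] (hfg : AddGroup.FG G)
    (φ ψ : G →+ G) :
    Finite (Quot (fun a b : G => ∃ h : G, a = ψ h + b - φ h)) ↔
      Finite {g : G // φ g = ψ g} := by
  haveI : Module.Finite ℤ G := Module.Finite.iff_addGroup_fg.mpr hfg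
  haveI : IsNoetherian ℤ G := isNoetherian_of_isNoetherianRing_of_finite ℤ G
  set L : G →ₗ[ℤ] G := (ψ - φ).toIntLinearMap with hL
  have hLapp : ∀ h : G, L h = ψ h - φ h := fun h => rfl
  set r : G → G → Prop := fun a b => ∃ h : G, a = ψ h + b - φ h with hr
  have hriff : ∀ a b, r a b ↔ Submodule.Quotient.mk (p := LinearMap.range L) a =
      Submodule.Quotient.mk b := by
    intro a b
    rw [Submodule.Quotient.eq]
    constructor
    · rintro ⟨h, rfl⟩
      exact ⟨h, by rw [hLapp]; abel⟩
    · rintro ⟨h, hh⟩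
      refine ⟨h, ?_⟩
      rw [hLapp] at hh
      rw [show ψ h + b - φ h = (ψ h - φ h) + b by abel, hh]
      abel
  -- Finite (Quot r) ↔ Finite (G ⧸ range L)
  have e1 : Finite (Quot r) ↔ Finite (G ⧸ LinearMap.range L) := by
    constructor
    · intro hfin
      exact Finite.of_surjective
        (Quot.lift (Submodule.Quotient.mk (p := LinearMap.range L))
          (fun a b hab => (hriff a b).mp hab))
        (fun q => by
          obtain ⟨a, rfl⟩ := Submodule.Quotient.mk_surjective _ q
          exact ⟨Quot.mk r a, rfl⟩)
    · intro hfin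
      exact Finite.of_surjective
        (Quotient.lift (Quot.mk r)
          (fun a b hab => Quot.sound ((hriff a b).mpr
            ((Submodule.Quotient.eq _).mpr ((Submodule.quotientRel_def _).mp hab)))))
        (fun q => by
          obtain ⟨a⟩ := q
          exact ⟨Submodule.Quotient.mk a, rfl⟩)
  -- Coin ≃ ker L
  have e2 : {g : G // φ g = ψ g} ≃ LinearMap.ker L :=
    Equiv.subtypeEquivRight fun g => by
      rw [LinearMap.mem_ker, hLapp, sub_eq_zero]; exact eq_comm
  -- rank of cokernel = rank of kernel
  have hcancel : Module.rank ℤ (G ⧸ LinearMap.range L) = Module.rank ℤ (LinearMap.ker L) := by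
    have h1 := Submodule.rank_quotient_add_rank (LinearMap.range L)
    have h2 := LinearMap.rank_range_add_rank_ker L
    rw [add_comm] at h2
    exact Cardinal.eq_of_add_eq_add_right (h1.trans h2.symm)
      (Module.rank_lt_aleph0 ℤ (LinearMap.range L))
  rw [e1, aux_finite_iff_rank_zero, hcancel, ← aux_finite_iff_rank_zero]
  exact ⟨fun h => Finite.of_equiv _ e2.symm, fun h => Finite.of_equiv _ e2⟩
end
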